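/- arXiv:1506.06850 — 2 statements merged into one kernel-verified Lean document; each statement's English description precedes it below -/
import Mathlib

section
/- Case 1 of the per-subcarrier upper-bound optimization: if λ ≤ 2ν, then for every fixed p ∈ [0, p̄], the function α ↦ (λ/2)·log(1 + p·h·α) − p·(μ − ν·h·(1−α)) is nonincreasing on [0,1]; hence a maximizer has α* = 0, and with α = 0 the objective reduces to p·(ν·h − μ), whose maximizer over [0, p̄] is p* = p̄ if ν·h ≥ μ and p* = 0 otherwise. -/
/-- Case 1 of the per-subcarrier upper-bound optimization: if λ ≤ 2ν the Lagrangian is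
nonincreasing in α, at α = 0 it reduces to p·(νh − μ), maximized at p̄ if νh ≥ μ, else at 0. -/
theorem stmt_12 (lam mu nu h pbar : ℝ)
    (hlam : lam ∈ Set.Icc (0:ℝ) 1) (hmu : 0 ≤ mu) (hnu : 0 < nu)
    (hh : 0 < h) (hpbar : 0 < pbar) (hcase : lam ≤ 2 * nu) :
    (∀ p ∈ Set.Icc (0:ℝ) pbar,
      AntitoneOn (fun alpha : ℝ => lam / 2 * Real.log (1 + p * h * alpha)
        - p * (mu - nu * h * (1 - alpha))) (Set.Icc 0 1)) ∧
    (∀ p : ℝ, lam / 2 * Real.log (1 + p * h * 0)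
        - p * (mu - nu * h * (1 - 0)) = p * (nu * h - mu)) ∧
    (nu * h ≥ mu → IsMaxOn (fun p : ℝ => p * (nu * h - mu)) (Set.Icc 0 pbar) pbar) ∧
    (nu * h < mu → IsMaxOn (fun p : ℝ => p * (nu * h - mu)) (Set.Icc 0 pbar) 0) := by
  obtain ⟨hlam0, hlam1⟩ := hlam
  refine ⟨?_, ?_, ?_, ?_⟩
  · rintro p ⟨hp0, hpb⟩ a ⟨ha0, ha1⟩ b ⟨hb0, hb1⟩ hab
    simp only
    have hph : 0 ≤ p * h := mul_nonneg hp0 hh.le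
    have hX : (0:ℝ) < 1 + p * h * a := by nlinarith
    have hY : (0:ℝ) < 1 + p * h * b := by nlinarith
    have hlog : Real.log (1 + p * h * b) - Real.log (1 + p * h * a)
        ≤ p * h * (b - a) := by
      have h1 : Real.log ((1 + p * h * b) / (1 + p * h * a))
          ≤ (1 + p * h * b) / (1 + p * h * a) - 1 :=
        Real.log_le_sub_one_of_pos (div_pos hY hX)
      rw [Real.log_div hY.ne' hX.ne'] at h1
      have h2 : (1 + p * h * b) / (1 + p * h * a) - 1
          = p * h * (b - a) / (1 + p * h * a) := by
        field_simp
        ring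
      rw [h2] at h1
      refine h1.trans ?_
      rw [div_le_iff₀ hX]
      nlinarith [mul_nonneg (mul_nonneg hph (sub_nonneg.mpr hab)) (mul_nonneg hph ha0)]
    nlinarith [mul_le_mul_of_nonneg_left hlog (by linarith : (0:ℝ) ≤ lam / 2),
      mul_nonneg hph (sub_nonneg.mpr hab)]
  · intro p; simp [Real.log_one]; ring
  · intro hc x ⟨hx0, hxb⟩
    simp only [Set.mem_setOf_eq]
    nlinarith [sub_nonneg.mpr hc]
  · intro hc x ⟨hx0, hxb⟩
    simp only [Set.mem_setOf_eq]
    nlinarith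
end

section
/- Case 2 of the per-subcarrier upper-bound optimization: if λ > 2ν > 0 and 2ν·p̄·h ≤ λ − 2ν, then for every p ∈ [0, p̄], the derivative ∂L/∂α = (λ/2)·p·h/(1 + p·h·α) − p·h·ν is nonnegative for all α ∈ [0,1]; hence α* = 1 is optimal, and with α = 1 the maximizer of L(p, 1) = (λ/2)·log(1 + p·h) − μ·p over [0, p̄] is p* = min(p̄, max(0, λ/(2μ) − 1/h)). -/
/-- Case 2 of the per-subcarrier upper-bound optimization: if λ > 2ν and 2νp̄h ≤ λ − 2ν,
the α-derivative is nonnegative, so α* = 1, and with α = 1 the optimal power is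
the clipped water-filling level. -/
theorem stmt_13 (lam mu nu h pbar : ℝ)
    (hlam : lam ∈ Set.Ioc (0:ℝ) 1) (hmu : 0 < mu) (hnu : 0 < nu)
    (hh : 0 < h) (hpbar : 0 < pbar)
    (hcase : lam > 2 * nu) (hcase2 : 2 * nu * pbar * h ≤ lam - 2 * nu) :
    (∀ p ∈ Set.Icc (0:ℝ) pbar, ∀ alpha ∈ Set.Icc (0:ℝ) 1,
      0 ≤ lam / 2 * (p * h / (1 + p * h * alpha)) - p * h * nu) ∧
    IsMaxOn (fun p : ℝ => lam / 2 * Real.log (1 + p * h) - mu * p)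
      (Set.Icc 0 pbar) (min pbar (max 0 (lam / (2 * mu) - 1 / h))) := by
  constructor
  · intro p hp alpha ha
    have hph : 0 ≤ p * h := mul_nonneg hp.1 hh.le
    have hden : 0 < 1 + p * h * alpha := by nlinarith [mul_nonneg hph ha.1]
    rw [← mul_div_assoc, sub_nonneg, le_div_iff₀ hden]
    have h1 : p * h * alpha ≤ p * h := by nlinarith [ha.2]
    have h2 : p * h ≤ pbar * h := by nlinarith [hp.2]
    nlinarith [mul_le_mul_of_nonneg_left h1 hnu.le,
      mul_le_mul_of_nonneg_left h2 hnu.le,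
      mul_le_mul_of_nonneg_left hcase2 hph]
  · set c := lam / (2 * mu) - 1 / h with hc
    set q := min pbar (max 0 c) with hq
    have hq0 : 0 ≤ q := le_min hpbar.le (le_max_left 0 c)
    have hqp : q ≤ pbar := min_le_left _ _
    have hdq : 0 < 1 + q * h := by nlinarith [mul_nonneg hq0 hh.le]
    intro p hp
    simp only [Set.mem_setOf_eq]
    have hdp : 0 < 1 + p * h := by nlinarith [mul_nonneg hp.1 hh.le]
    have hlog : Real.log (1 + p * h) - Real.log (1 + q * h)
        ≤ (p - q) * h / (1 + q * h) := by
      rw [← Real.log_div hdp.ne' hdq.ne']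
      calc Real.log ((1 + p * h) / (1 + q * h))
          ≤ (1 + p * h) / (1 + q * h) - 1 :=
            Real.log_le_sub_one_of_pos (div_pos hdp hdq)
        _ = (p - q) * h / (1 + q * h) := by field_simp; ring
    have hD : (p - q) * (lam / 2 * h / (1 + q * h) - mu) ≤ 0 := by
      rcases le_or_gt c 0 with h1 | h1
      · have hqe : q = 0 := by rw [hq, max_eq_left h1, min_eq_right hpbar.le]
        have hlh : lam * h ≤ 2 * mu := by
          have : lam / (2 * mu) ≤ 1 / h := by linarith [sub_nonpos.mp h1]
          rw [div_le_div_iff₀ (by linarith) hh] at this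
          linarith
        apply mul_nonpos_of_nonneg_of_nonpos
        · rw [hqe]; linarith [hp.1]
        · rw [hqe]
          have : lam / 2 * h / (1 + 0 * h) = lam * h / 2 := by ring
          rw [this]
          linarith
      · rcases le_or_gt c pbar with h2 | h2
        · have hqe : q = c := by rw [hq, max_eq_right h1.le, min_eq_right h2]
          have hden : 1 + q * h = lam * h / (2 * mu) := by
            rw [hqe, hc]; field_simp; ring
          have hl0 : lam ≠ 0 := ne_of_gt hlam.1
          have hh0 : h ≠ 0 := hh.ne'
          have : lam / 2 * h / (1 + q * h) - mu = 0 := by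
            rw [hden]; field_simp; ring
          rw [this, mul_zero]
        · have hqe : q = pbar := by rw [hq, max_eq_right h1.le, min_eq_left h2.le]
          apply mul_nonpos_of_nonpos_of_nonneg
          · rw [hqe]; linarith [hp.2]
          · rw [sub_nonneg, le_div_iff₀ hdq]
            have : pbar + 1 / h < lam / (2 * mu) := by rw [hc] at h2; linarith
            rw [lt_div_iff₀ (by linarith)] at this
            have hh' : (pbar + 1 / h) * h = pbar * h + 1 := by field_simp
            rw [hqe]
            nlinarith
    have hmul := mul_le_mul_of_nonneg_left hlog (by linarith [hlam.1] : (0:ℝ) ≤ lam / 2)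
    have hid : lam / 2 * ((p - q) * h / (1 + q * h)) - mu * (p - q)
        = (p - q) * (lam / 2 * h / (1 + q * h) - mu) := by ring
    linarith [hmul, hD]
end
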